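/- arXiv:2602.21201 — 8 statements merged into one kernel-verified Lean document; each statement's English description precedes it below -/
import Mathlib

section
/- Let R be a commutative local ring and n ≥ 1. For a vector v ∈ Rⁿ the following are equivalent: (a) at least one entry of v is a unit of R; (b) there exists an invertible matrix h ∈ GL_n(R) whose last column is v. -/
/-- Over a commutative local ring `R` and `n ≥ 1`, a vector `v ∈ Rⁿ` has some
unit entry iff it is the last column of some invertible `n×n` matrix. -/
theorem stmt_1 {R : Type*} [CommRing R] [IsLocalRing R] (n : ℕ) (hn : 1 ≤ n)
    (v : Fin n → R) :
    (∃ i, IsUnit (v i)) ↔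
      ∃ h : Matrix (Fin n) (Fin n) R, IsUnit h ∧ ∀ i, h i ⟨n - 1, by omega⟩ = v i := by
  set j0 : Fin n := ⟨n - 1, by omega⟩ with hj0
  constructor
  · rintro ⟨i0, hi0⟩
    set σ : Equiv.Perm (Fin n) := Equiv.swap i0 j0 with hσ
    refine ⟨((1 : Matrix (Fin n) (Fin n) R).updateCol j0 (v ∘ σ)).submatrix σ id, ?_, ?_⟩
    · rw [Matrix.isUnit_iff_isUnit_det, Matrix.det_permute,
        ← Matrix.cramer_apply, Matrix.cramer_one]
      have : (v ∘ σ) j0 = v i0 := by simp [hσ, Equiv.swap_apply_right]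
      simp only [Module.End.one_apply, this]
      rcases Int.units_eq_one_or (Equiv.Perm.sign σ) with h | h <;> rw [h] <;> simp [hi0, hi0.neg]
    · intro i
      simp [hσ, Matrix.submatrix_apply, Matrix.updateCol_self, Equiv.swap_apply_self]
  · rintro ⟨h, hu, hcol⟩
    by_contra hv
    push_neg at hv
    have hdet : IsUnit h.det := (Matrix.isUnit_iff_isUnit_det h).mp hu
    have heq : h.updateCol j0 v = h := by
      ext i j
      rcases eq_or_ne j j0 with rfl | hj
      · simp [Matrix.updateCol_self, hcol]
      · simp [Matrix.updateCol_ne hj]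
    have : h.det = ∑ i, h.adjugate j0 i * v i := by
      conv_lhs => rw [← heq]
      rw [← Matrix.cramer_apply, Matrix.cramer_eq_adjugate_mulVec]
      rfl
    have hmem : h.det ∈ IsLocalRing.maximalIdeal R := by
      rw [this]
      exact Ideal.sum_mem _ fun i _ => Ideal.mul_mem_left _ _ (hv i)
    exact hmem hdet
end

section
/- Let R be a finite commutative local ring with maximal ideal m, and let ψ : R → ℂˣ be an additive character (ψ(a+b) = ψ(a)ψ(b) for all a,b ∈ R) such that the only ideal of R contained in the kernel of ψ is the zero ideal. Fix n ≥ 1 and a function H : Rⁿ → ℂ. Call y ∈ Rⁿ unimodular if at least one coordinate of y is a unit of R. Suppose that Σ_{η ∈ Rⁿ} H(η)·ψ(Σ_{i=1}^n η_i y_i) = 0 for every unimodular y ∈ Rⁿ. Then H is invariant under translation by Aⁿ, where A = {a ∈ R : a·x = 0 for all x ∈ m} is the annihilator of m; that is, H(η + δ) = H(η) for all η ∈ Rⁿ and all δ ∈ Aⁿ. -/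
/-- Let `R` be a finite commutative local ring with maximal ideal `m`, and
`ψ : R → ℂˣ` an additive character whose kernel contains no nonzero ideal.  If
`H : Rⁿ → ℂ` satisfies `Σ_η H(η) ψ(Σᵢ ηᵢ yᵢ) = 0` for every unimodular `y ∈ Rⁿ`, then `H`
is invariant under translation by `Aⁿ`, where `A` is the annihilator of `m`. -/
theorem stmt_2 {R : Type*} [CommRing R] [IsLocalRing R] [Fintype R]
    (ψ : R → ℂˣ) (hψ : ∀ a b : R, ψ (a + b) = ψ a * ψ b)
    (hker : ∀ I : Ideal R, (∀ a ∈ I, ψ a = 1) → I = ⊥)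
    (n : ℕ) (hn : 1 ≤ n) (H : (Fin n → R) → ℂ)
    (hvanish : ∀ y : Fin n → R, (∃ i, IsUnit (y i)) →
      ∑ η : Fin n → R, H η * (ψ (∑ i, η i * y i) : ℂ) = 0) :
    ∀ η δ : Fin n → R,
      (∀ i, ∀ x ∈ IsLocalRing.maximalIdeal R, δ i * x = 0) →
      H (η + δ) = H η := by
  classical
  intro η δ hδ
  have hψ0 : ψ 0 = 1 := by
    have h := hψ 0 0
    rw [add_zero] at h
    exact left_eq_mul.mp h
  -- scalar orthogonality
  have key : ∀ c : R, c ≠ 0 → ∑ x : R, ((ψ (c * x)) : ℂ) = 0 := by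
    intro c hc
    obtain ⟨x0, hx0⟩ : ∃ x0 : R, ψ (c * x0) ≠ 1 := by
      by_contra h
      push_neg at h
      refine hc ?_
      have hb : Ideal.span {c} = ⊥ := hker _ (fun a ha => by
        rw [Ideal.mem_span_singleton] at ha
        obtain ⟨x, rfl⟩ := ha
        exact h x)
      rwa [Ideal.span_singleton_eq_bot] at hb
    have hshift : ∑ x : R, ((ψ (c * x)) : ℂ)
        = ∑ x : R, ((ψ (c * (x + x0))) : ℂ) :=
      (Equiv.sum_comp (Equiv.addRight x0) (fun x => ((ψ (c * x)) : ℂ))).symm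
    have hexp : ∀ x : R, ((ψ (c * (x + x0))) : ℂ)
        = ((ψ (c * x)) : ℂ) * ((ψ (c * x0)) : ℂ) := by
      intro x
      rw [mul_add, hψ, Units.val_mul]
    have hSS : (∑ x : R, ((ψ (c * x)) : ℂ)) * ((ψ (c * x0)) : ℂ)
        = ∑ x : R, ((ψ (c * x)) : ℂ) := by
      rw [Finset.sum_mul]
      simp_rw [← hexp]
      exact hshift.symm
    have hne : ((ψ (c * x0)) : ℂ) ≠ 1 := fun h => hx0 (Units.ext h)
    have h2 : (∑ x : R, ((ψ (c * x)) : ℂ)) * (1 - ((ψ (c * x0)) : ℂ)) = 0 := by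
      rw [mul_sub, mul_one, hSS, sub_self]
    rcases mul_eq_zero.mp h2 with h3 | h3
    · exact h3
    · exact absurd (sub_eq_zero.mp h3).symm hne
  -- ψ of a sum is a product
  have hpsum : ∀ (s : Finset (Fin n)) (g : Fin n → R),
      ((ψ (∑ i ∈ s, g i)) : ℂ) = ∏ i ∈ s, ((ψ (g i)) : ℂ) := by
    intro s
    induction s using Finset.cons_induction with
    | empty => intro g; simp [hψ0]
    | cons a s ha ih =>
      intro g
      rw [Finset.sum_cons, Finset.prod_cons, hψ, Units.val_mul, ih]
  -- vector orthogonality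
  set N : ℂ := ((Fintype.card R : ℂ)) ^ n with hNdef
  have inner : ∀ c : Fin n → R,
      ∑ y : Fin n → R, ((ψ (∑ i, c i * y i)) : ℂ)
        = if c = 0 then N else 0 := by
    intro c
    by_cases hc : c = 0
    · subst hc
      rw [if_pos rfl, hNdef]
      simp [hψ0, Fintype.card_fun]
    · rw [if_neg hc]
      have hyp : ∀ y : Fin n → R, ((ψ (∑ i, c i * y i)) : ℂ)
          = ∏ i, ((ψ (c i * y i)) : ℂ) := fun y => hpsum Finset.univ _
      simp_rw [hyp]
      have h1 : ∑ y : Fin n → R, ∏ i, ((ψ (c i * y i)) : ℂ)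
          = ∏ i, ∑ x : R, ((ψ (c i * x)) : ℂ) := by
        rw [Finset.prod_univ_sum, Fintype.piFinset_univ]
      rw [h1]
      obtain ⟨i, hi⟩ : ∃ i, c i ≠ 0 := by
        by_contra h; push_neg at h; exact hc (funext h)
      exact Finset.prod_eq_zero (Finset.mem_univ i) (key _ hi)
  -- combining characters
  have hcomb : ∀ (a y ξ : Fin n → R),
      ((ψ (∑ i, ξ i * y i)) : ℂ) * ((ψ (∑ i, (-(a i)) * y i)) : ℂ)
        = ((ψ (∑ i, (ξ i - a i) * y i)) : ℂ) := by
    intro a y ξ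
    have hx : ∑ i, ξ i * y i + ∑ i, (-(a i)) * y i = ∑ i, (ξ i - a i) * y i := by
      rw [← Finset.sum_add_distrib]
      exact Finset.sum_congr rfl fun i _ => by ring
    rw [← Units.val_mul, ← hψ, hx]
  -- Fourier inversion piece
  have hsumA : ∀ a : Fin n → R,
      ∑ y : Fin n → R, ∑ ξ : Fin n → R,
        H ξ * ((ψ (∑ i, ξ i * y i)) : ℂ) * ((ψ (∑ i, (-(a i)) * y i)) : ℂ)
        = N * H a := by
    intro a
    rw [Finset.sum_comm]
    have hstep : ∀ ξ : Fin n → R,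
        ∑ y : Fin n → R,
          H ξ * ((ψ (∑ i, ξ i * y i)) : ℂ) * ((ψ (∑ i, (-(a i)) * y i)) : ℂ)
          = H ξ * (if ξ = a then N else 0) := by
      intro ξ
      simp_rw [mul_assoc, hcomb a]
      rw [← Finset.mul_sum, inner]
      congr 1
      have : ((fun i => ξ i - a i) = 0) ↔ ξ = a := by
        constructor
        · intro h
          funext i
          have := congrFun h i
          simpa [sub_eq_zero] using this
        · rintro rfl; funext i; simp
      simp [this]
    simp_rw [hstep]
    simp_rw [mul_ite, mul_zero]
    rw [Finset.sum_ite_eq' Finset.univ a (fun ξ => H ξ * N), if_pos (Finset.mem_univ a),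
      mul_comm]
  -- the big sum is zero termwise
  have hm : ∀ y : Fin n → R, (¬ ∃ i, IsUnit (y i)) → ∑ i, δ i * y i = 0 := by
    intro y hy
    push_neg at hy
    refine Finset.sum_eq_zero fun i _ => hδ i (y i) ?_
    rw [IsLocalRing.mem_maximalIdeal]
    exact hy i
  have hS0 : ∑ y : Fin n → R,
      (∑ ξ : Fin n → R, H ξ * ((ψ (∑ i, ξ i * y i)) : ℂ)) *
        (((ψ (∑ i, (-((η + δ) i)) * y i)) : ℂ) - ((ψ (∑ i, (-(η i)) * y i)) : ℂ)) = 0 := by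
    refine Finset.sum_eq_zero fun y _ => ?_
    by_cases hy : ∃ i, IsUnit (y i)
    · rw [hvanish y hy, zero_mul]
    · have h1 : ∑ i, (-((η + δ) i)) * y i = ∑ i, (-(η i)) * y i := by
        have h2 := hm y hy
        have h3 : ∑ i, (-((η + δ) i)) * y i
            = ∑ i, (-(η i)) * y i - ∑ i, δ i * y i := by
          rw [← Finset.sum_sub_distrib]
          exact Finset.sum_congr rfl fun i _ => by simp [Pi.add_apply]; ring
        rw [h3, h2, sub_zero]
      rw [h1, sub_self, mul_zero]
  -- expand the big sum
  have hS2 : ∑ y : Fin n → R,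
      (∑ ξ : Fin n → R, H ξ * ((ψ (∑ i, ξ i * y i)) : ℂ)) *
        (((ψ (∑ i, (-((η + δ) i)) * y i)) : ℂ) - ((ψ (∑ i, (-(η i)) * y i)) : ℂ))
      = N * H (η + δ) - N * H η := by
    have hterm : ∀ y : Fin n → R,
        (∑ ξ : Fin n → R, H ξ * ((ψ (∑ i, ξ i * y i)) : ℂ)) *
          (((ψ (∑ i, (-((η + δ) i)) * y i)) : ℂ) - ((ψ (∑ i, (-(η i)) * y i)) : ℂ))
        = (∑ ξ : Fin n → R,
            H ξ * ((ψ (∑ i, ξ i * y i)) : ℂ) * ((ψ (∑ i, (-((η + δ) i)) * y i)) : ℂ))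
          - (∑ ξ : Fin n → R,
            H ξ * ((ψ (∑ i, ξ i * y i)) : ℂ) * ((ψ (∑ i, (-(η i)) * y i)) : ℂ)) := by
      intro y
      rw [mul_sub, Finset.sum_mul, Finset.sum_mul]
    simp_rw [hterm]
    rw [Finset.sum_sub_distrib, hsumA (η + δ), hsumA η]
  have hNne : N ≠ 0 := by
    rw [hNdef]
    apply pow_ne_zero
    exact_mod_cast Fintype.card_ne_zero
  have hfin : N * H (η + δ) - N * H η = 0 := by rw [← hS2, hS0]
  have : N * (H (η + δ) - H η) = 0 := by rw [mul_sub, hfin]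
  rcases mul_eq_zero.mp this with h | h
  · exact absurd h hNne
  · exact sub_eq_zero.mp h
end

section
/- Let G be a finite group, O a transfer system on G, J ≤ H ≤ G subgroups, and T a finite H-set such that for every t ∈ T the stabilizer Stab_H(t) is O-admissible in H. Let ‖J‖_O denote the maximum of the indices [J : L] over all subgroups L ≤ J with L ⊆_O J (a maximum over a nonempty set, since J ⊆_O J). Then |T| ≤ ‖J‖_O · N, where N is the number of orbits of the restricted action of J on T. -/
/-!
Each `J`-orbit of `t ∈ T` has size `[J : Stab_J(t)]`, and `Stab_J(t) = Stab_H(t) ∩ J` is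
`O`-admissible in `J` by restriction, so every orbit has at most `‖J‖_O` elements; summing over
the `N` orbits gives the bound.
-/

open MulAction

theorem MulAction.card_le_mul_card_orbitRel_quotient {M α : Type*} [Group M] [MulAction M α]
    [Finite α] {m : ℕ} (h : ∀ a : α, Nat.card (orbit M a) ≤ m) :
    Nat.card α ≤ m * Nat.card (orbitRel.Quotient M α) := by
  classical
  have := Fintype.ofFinite α
  rw [Nat.card_congr (selfEquivSigmaOrbits' M α), Nat.card_sigma, mul_comm, ← smul_eq_mul,
    Nat.card_eq_fintype_card, ← Finset.card_univ]
  refine Finset.sum_le_card_nsmul _ _ _ fun ω _ => ?_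
  induction ω using Quotient.inductionOn' with
  | h a => rw [orbitRel.Quotient.orbit_mk]; exact h a

theorem MulAction.card_orbit_subgroupOf_eq_relIndex {G X : Type*} [Group G] {J H : Subgroup G}
    (hJH : J ≤ H) [MulAction H X] (x : X) :
    Nat.card (orbit (J.subgroupOf H) x) = ((stabilizer H x).map H.subtype).relIndex J := by
  calc Nat.card (orbit (J.subgroupOf H) x)
      = (stabilizer H x).relIndex (J.subgroupOf H) :=
        (Nat.card_coe_set_eq _).trans (index_stabilizer _ x).symm
    _ = ((stabilizer H x).map H.subtype).relIndex ((J.subgroupOf H).map H.subtype) :=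
        (Subgroup.relIndex_map_map_of_injective _ _ H.subtype_injective).symm
    _ = ((stabilizer H x).map H.subtype).relIndex J := by
        rw [Subgroup.map_subgroupOf_eq_of_le hJH]

theorem stmt_5_general {G : Type*} [Group G]
    (O : Subgroup G → Subgroup G → Prop)
    (hres : ∀ ⦃K H : Subgroup G⦄, O K H → ∀ ⦃J : Subgroup G⦄, J ≤ H → O (K ⊓ J) J)
    (J H : Subgroup G) (hJH : J ≤ H)
    (T : Type*) [Finite T] [MulAction H T]
    (hstab : ∀ t : T, O (Subgroup.map H.subtype (MulAction.stabilizer H t)) H)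
    (normJ : ℕ)
    (hnorm : IsGreatest {m : ℕ | ∃ L : Subgroup G, O L J ∧ Subgroup.relIndex L J = m} normJ) :
    Nat.card T ≤ normJ * Nat.card (MulAction.orbitRel.Quotient (J.subgroupOf H) T) := by
  refine card_le_mul_card_orbitRel_quotient fun t => ?_
  rw [card_orbit_subgroupOf_eq_relIndex hJH, ← Subgroup.inf_relIndex_right]
  exact hnorm.2 ⟨_, hres (hstab t) hJH, rfl⟩

/-- For a transfer system `O` on a finite group `G`, subgroups `J ≤ H ≤ G`,
and a finite `H`-set `T` all of whose `H`-stabilizers are `O`-admissible in `H`, we have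
`|T| ≤ ‖J‖_O · N` where `‖J‖_O` is the maximum of the indices `[J : L]` over subgroups
`L` with `L ⊆_O J`, and `N` is the number of orbits of the restricted `J`-action on `T`. -/
theorem stmt_5 {G : Type*} [Group G] [Finite G]
    (O : Subgroup G → Subgroup G → Prop)
    (hrefl : ∀ H : Subgroup G, O H H)
    (htrans : ∀ ⦃K L H : Subgroup G⦄, O K L → O L H → O K H)
    (hrefines : ∀ ⦃K H : Subgroup G⦄, O K H → K ≤ H)
    (hconj : ∀ (g : G) ⦃K H : Subgroup G⦄, O K H →
      O (Subgroup.map (MulAut.conj g).toMonoidHom K)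
        (Subgroup.map (MulAut.conj g).toMonoidHom H))
    (hres : ∀ ⦃K H : Subgroup G⦄, O K H → ∀ ⦃J : Subgroup G⦄, J ≤ H → O (K ⊓ J) J)
    (J H : Subgroup G) (hJH : J ≤ H)
    (T : Type*) [Finite T] [MulAction H T]
    (hstab : ∀ t : T, O (Subgroup.map H.subtype (MulAction.stabilizer H t)) H)
    (normJ : ℕ)
    (hnorm : IsGreatest {m : ℕ | ∃ L : Subgroup G, O L J ∧ Subgroup.relIndex L J = m} normJ) :
    Nat.card T ≤ normJ * Nat.card (MulAction.orbitRel.Quotient (J.subgroupOf H) T) :=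
  stmt_5_general O hres J H hJH T hstab normJ hnorm
end

section
/- Let r₁, r₂, r₃, r₄ ∈ ℝ⁴ satisfy ω(r₁,r₂) = ω(r₂,r₃) = ω(r₃,r₄) = ω(r₄,r₁) = 0 and span{r₁,r₂,r₃,r₄} = ℝ⁴. Then: (1) ω(r₁,r₃) ≠ 0, so P₁₃ := span{r₁,r₃} is a 2-dimensional subspace on which the restriction of ω is nondegenerate; (2) P₂₄ := span{r₂,r₄} is 2-dimensional and equals the ω-orthogonal complement P₁₃^ω; (3) ℝ⁴ is the direct sum P₁₃ ⊕ P₂₄. -/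
/-- The ω-orthogonal complement of a subspace `P`: `{v : ω(v,p) = 0 for all p ∈ P}`. -/
noncomputable def omegaPerp (ω : LinearMap.BilinForm ℝ (Fin 4 → ℝ))
    (P : Submodule ℝ (Fin 4 → ℝ)) : Submodule ℝ (Fin 4 → ℝ) :=
  ⨅ p ∈ P, LinearMap.ker (ω.flip p)

lemma aux13 (ω : LinearMap.BilinForm ℝ (Fin 4 → ℝ))
    (halt : ∀ v, ω v v = 0)
    (hnd : ∀ v, (∀ w, ω v w = 0) → v = 0)
    (s₁ s₂ s₃ s₄ : Fin 4 → ℝ)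
    (h12 : ω s₁ s₂ = 0) (h23 : ω s₂ s₃ = 0) (h34 : ω s₃ s₄ = 0) (h41 : ω s₄ s₁ = 0)
    (hspan : Submodule.span ℝ {s₁, s₂, s₃, s₄} = ⊤) :
    ω s₁ s₃ ≠ 0 := by
  have hskew : ∀ v w, ω v w = - ω w v := by
    intro v w
    have h := halt (v + w)
    simp only [map_add, LinearMap.add_apply, halt] at h
    linarith
  intro h13
  have hr1 : s₁ = 0 := by
    apply hnd
    intro w
    have hw : w ∈ Submodule.span ℝ ({s₁, s₂, s₃, s₄} : Set (Fin 4 → ℝ)) := by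
      rw [hspan]; trivial
    induction hw using Submodule.span_induction with
    | mem x hx =>
      rcases hx with rfl | rfl | rfl | rfl
      · exact halt _
      · exact h12
      · exact h13
      · rw [hskew]; rw [h41]; ring
    | zero => simp
    | add x y _ _ hx hy => simp [hx, hy]
    | smul a x _ hx => simp [hx]
  have hr3 : s₃ = 0 := by
    apply hnd
    intro w
    have hw : w ∈ Submodule.span ℝ ({s₁, s₂, s₃, s₄} : Set (Fin 4 → ℝ)) := by
      rw [hspan]; trivial
    induction hw using Submodule.span_induction with
    | mem x hx =>
      rcases hx with rfl | rfl | rfl | rfl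
      · rw [hr1]; simp
      · rw [hskew, h23]; ring
      · exact halt _
      · exact h34
    | zero => simp
    | add x y _ _ hx hy => simp [hx, hy]
    | smul a x _ hx => simp [hx]
  -- dimension contradiction: span of {0, s₂, 0, s₄} cannot be all of ℝ⁴
  subst hr1 hr3
  have hset : ({0, s₂, 0, s₄} : Set (Fin 4 → ℝ)) = insert 0 {s₂, s₄} := by
    ext x; simp; tauto
  rw [hset, Submodule.span_insert_zero] at hspan
  haveI : Fintype ({s₂, s₄} : Set (Fin 4 → ℝ)) := (Set.toFinite _).fintype
  have hle : Module.finrank ℝ (Submodule.span ℝ ({s₂, s₄} : Set (Fin 4 → ℝ))) ≤ 2 := by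
    refine le_trans (finrank_span_le_card _) ?_
    classical
    calc (({s₂, s₄} : Set (Fin 4 → ℝ)).toFinset).card
        ≤ ({s₂, s₄} : Finset (Fin 4 → ℝ)).card := by
          apply Finset.card_le_card; intro x; simp
      _ ≤ 2 := le_trans (Finset.card_insert_le _ _) (by simp)
  rw [hspan, finrank_top] at hle
  simp [Module.finrank_fintype_fun_eq_card] at hle

/-- If `r₁,r₂,r₃,r₄ ∈ ℝ⁴` satisfy `ω(r₁,r₂)=ω(r₂,r₃)=ω(r₃,r₄)=ω(r₄,r₁)=0`
and span `ℝ⁴`, where `ω` is a nondegenerate alternating bilinear form, then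
`ω(r₁,r₃) ≠ 0`, `P₁₃ = span{r₁,r₃}` is a 2-dimensional subspace on which `ω` restricts
nondegenerately, `P₂₄ = span{r₂,r₄}` is 2-dimensional and equals `P₁₃^ω`, and
`ℝ⁴ = P₁₃ ⊕ P₂₄`. -/
theorem stmt_7 (ω : LinearMap.BilinForm ℝ (Fin 4 → ℝ))
    (halt : ∀ v, ω v v = 0)
    (hnd : ∀ v, (∀ w, ω v w = 0) → v = 0)
    (r₁ r₂ r₃ r₄ : Fin 4 → ℝ)
    (h12 : ω r₁ r₂ = 0) (h23 : ω r₂ r₃ = 0) (h34 : ω r₃ r₄ = 0) (h41 : ω r₄ r₁ = 0)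
    (hspan : Submodule.span ℝ {r₁, r₂, r₃, r₄} = ⊤) :
    ω r₁ r₃ ≠ 0 ∧
    (Module.finrank ℝ (Submodule.span ℝ {r₁, r₃}) = 2 ∧
      ∀ v ∈ Submodule.span ℝ ({r₁, r₃} : Set (Fin 4 → ℝ)),
        (∀ w ∈ Submodule.span ℝ ({r₁, r₃} : Set (Fin 4 → ℝ)), ω v w = 0) → v = 0) ∧
    (Module.finrank ℝ (Submodule.span ℝ {r₂, r₄}) = 2 ∧
      Submodule.span ℝ {r₂, r₄} = omegaPerp ω (Submodule.span ℝ {r₁, r₃})) ∧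
    IsCompl (Submodule.span ℝ ({r₁, r₃} : Set (Fin 4 → ℝ)))
      (Submodule.span ℝ ({r₂, r₄} : Set (Fin 4 → ℝ))) := by
  have hskew : ∀ v w, ω v w = - ω w v := by
    intro v w
    have h := halt (v + w)
    simp only [map_add, LinearMap.add_apply, halt] at h
    linarith
  have ha : ω r₁ r₃ ≠ 0 := aux13 ω halt hnd r₁ r₂ r₃ r₄ h12 h23 h34 h41 hspan
  have hb : ω r₂ r₄ ≠ 0 := by
    apply aux13 ω halt hnd r₂ r₃ r₄ r₁ h23 h34 h41 h12
    rw [show ({r₂, r₃, r₄, r₁} : Set (Fin 4 → ℝ)) = {r₁, r₂, r₃, r₄} by ext x; simp; tauto]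
    exact hspan
  -- finrank of span of a "symplectic pair" is 2
  have hfr2 : ∀ x y : Fin 4 → ℝ, ω x y ≠ 0 →
      Module.finrank ℝ (Submodule.span ℝ ({x, y} : Set (Fin 4 → ℝ))) = 2 := by
    intro x y hxy
    have hli : LinearIndependent ℝ ![x, y] := by
      rw [LinearIndependent.pair_iff]
      intro s t hst
      have h1 : ω (s • x + t • y) y = 0 := by rw [hst]; simp
      have h2 : ω (s • x + t • y) x = 0 := by rw [hst]; simp
      simp only [map_add, map_smul, LinearMap.add_apply, LinearMap.smul_apply,
        smul_eq_mul, halt] at h1 h2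
      have hyx : ω y x = - ω x y := hskew y x
      constructor
      · have : s * ω x y = 0 := by linarith [h1]
        exact (mul_eq_zero.mp this).resolve_right hxy
      · rw [hyx] at h2
        have : t * ω x y = 0 := by linarith [h2]
        exact (mul_eq_zero.mp this).resolve_right hxy
    have hrange : Set.range ![x, y] = ({x, y} : Set (Fin 4 → ℝ)) := by
      ext z; simp [Fin.exists_fin_two]; tauto
    rw [← hrange, finrank_span_eq_card hli]
    simp
  -- nondegeneracy of ω restricted to P₁₃
  have hPnd : ∀ v ∈ Submodule.span ℝ ({r₁, r₃} : Set (Fin 4 → ℝ)),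
      (∀ w ∈ Submodule.span ℝ ({r₁, r₃} : Set (Fin 4 → ℝ)), ω v w = 0) → v = 0 := by
    intro v hv h
    obtain ⟨c, d, rfl⟩ := Submodule.mem_span_pair.mp hv
    have h1 := h r₁ (Submodule.subset_span (by simp))
    have h3 := h r₃ (Submodule.subset_span (by simp))
    simp only [map_add, map_smul, LinearMap.add_apply, LinearMap.smul_apply,
      smul_eq_mul, halt] at h1 h3
    have h31 : ω r₃ r₁ = - ω r₁ r₃ := hskew r₃ r₁
    have hc : c = 0 := by
      have : c * ω r₁ r₃ = 0 := by linarith [h3]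
      exact (mul_eq_zero.mp this).resolve_right ha
    have hd : d = 0 := by
      rw [h31] at h1
      have : d * ω r₁ r₃ = 0 := by linarith [h1]
      exact (mul_eq_zero.mp this).resolve_right ha
    rw [hc, hd]; simp
  -- every element of P₂₄ is ω-orthogonal to P₁₃
  have hQP : ∀ v ∈ Submodule.span ℝ ({r₂, r₄} : Set (Fin 4 → ℝ)),
      ∀ w ∈ Submodule.span ℝ ({r₁, r₃} : Set (Fin 4 → ℝ)), ω v w = 0 := by
    intro v hv w hw
    obtain ⟨a, b, rfl⟩ := Submodule.mem_span_pair.mp hv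
    obtain ⟨c, d, rfl⟩ := Submodule.mem_span_pair.mp hw
    have h21 : ω r₂ r₁ = 0 := by rw [hskew, h12]; ring
    have h43 : ω r₄ r₃ = 0 := by rw [hskew, h34]; ring
    simp [map_add, map_smul, h21, h23, h41, h43]
  -- the two spans are complementary as a sup
  have hsup : Submodule.span ℝ ({r₁, r₃} : Set (Fin 4 → ℝ)) ⊔
      Submodule.span ℝ ({r₂, r₄} : Set (Fin 4 → ℝ)) = ⊤ := by
    rw [← Submodule.span_union]
    rw [show ({r₁, r₃} ∪ {r₂, r₄} : Set (Fin 4 → ℝ)) = {r₁, r₂, r₃, r₄} by ext x; simp; tauto]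
    exact hspan
  have hmem_perp : ∀ v, v ∈ omegaPerp ω (Submodule.span ℝ ({r₁, r₃} : Set (Fin 4 → ℝ))) ↔
      ∀ p ∈ Submodule.span ℝ ({r₁, r₃} : Set (Fin 4 → ℝ)), ω v p = 0 := by
    intro v
    simp [omegaPerp, Submodule.mem_iInf, LinearMap.mem_ker]
  have hQle : Submodule.span ℝ ({r₂, r₄} : Set (Fin 4 → ℝ)) ≤
      omegaPerp ω (Submodule.span ℝ ({r₁, r₃} : Set (Fin 4 → ℝ))) := by
    intro v hv
    exact (hmem_perp v).mpr (hQP v hv)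
  have hperpQ : omegaPerp ω (Submodule.span ℝ ({r₁, r₃} : Set (Fin 4 → ℝ))) ≤
      Submodule.span ℝ ({r₂, r₄} : Set (Fin 4 → ℝ)) := by
    intro v hv
    have hv' := (hmem_perp v).mp hv
    have hvtop : v ∈ Submodule.span ℝ ({r₁, r₃} : Set (Fin 4 → ℝ)) ⊔
        Submodule.span ℝ ({r₂, r₄} : Set (Fin 4 → ℝ)) := by rw [hsup]; trivial
    obtain ⟨p, hp, q, hq, hpq⟩ := Submodule.mem_sup.mp hvtop
    have hp0 : p = 0 := by
      apply hPnd p hp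
      intro w hw
      have h1 : ω v w = 0 := hv' w hw
      have h2 : ω q w = 0 := hQP q hq w hw
      have : ω (p + q) w = 0 := by rw [hpq]; exact h1
      simp only [map_add, LinearMap.add_apply, h2] at this
      linarith
    rw [← hpq, hp0, zero_add]
    exact hq
  refine ⟨ha, ⟨hfr2 r₁ r₃ ha, hPnd⟩, ⟨hfr2 r₂ r₄ hb, le_antisymm hQle hperpQ⟩, ?_⟩
  rw [isCompl_iff]
  constructor
  · rw [Submodule.disjoint_def]
    intro v hv1 hv2
    exact hPnd v hv1 (hQP v hv2)
  · rw [codisjoint_iff]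
    exact hsup
end

section
/- Let r₁, r₂, r₃, r₄ ∈ ℝ⁴ satisfy ω(r₁,r₂) = ω(r₂,r₃) = ω(r₃,r₄) = ω(r₄,r₁) = 0, suppose each of the pairs (r₁,r₂), (r₂,r₃), (r₃,r₄), (r₄,r₁) is linearly independent, and suppose V := span{r₁,r₂,r₃,r₄} has dimension 3. Let L = {v ∈ V : ω(v,w) = 0 for all w ∈ V} be the radical of the restriction of ω to V. Then either r₂ and r₄ each span L (in particular r₂ and r₄ are linearly dependent), or r₁ and r₃ each span L. -/
open Module Submodule LinearMap.BilinForm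

namespace LinearMap.BilinForm

variable {K E : Type*} [Field K] [AddCommGroup E] [Module K E] {B : LinearMap.BilinForm K E}

theorem mem_orthogonal_span_iff {s : Set E} {z : E} :
    z ∈ B.orthogonal (span K s) ↔ ∀ x ∈ s, B x z = 0 := by
  refine ⟨fun h x hx ↦ h x (subset_span hx), fun h y hy ↦ ?_⟩
  induction hy using span_induction with
  | mem x hx => exact h x hx
  | zero => simp
  | add x y _ _ hx hy => simp_all
  | smul c x _ hx => simp_all

theorem two_mul_finrank_le_of_le_orthogonal [FiniteDimensional K E] (hB : B.Nondegenerate)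
    {V : Submodule K E} (hV : V ≤ B.orthogonal V) : 2 * finrank K V ≤ finrank K E := by
  have := finrank_mono hV
  rw [finrank_orthogonal hB] at this
  have := V.finrank_le
  omega

namespace IsAlt

variable (hB : B.IsAlt) {x y : E}
include hB

theorem eq_zero_of_apply_smul_add_smul (hxy : B x y ≠ 0) {s t : K}
    (hx : B x (s • x + t • y) = 0) (hy : B y (s • x + t • y) = 0) : s = 0 ∧ t = 0 := by
  simp only [map_add, map_smul, smul_eq_mul, hB.self_eq_zero, mul_zero, zero_add,
    add_zero, ← hB.neg_eq x y, mul_neg, neg_eq_zero] at hx hy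
  exact ⟨(mul_eq_zero.1 hy).resolve_right hxy, (mul_eq_zero.1 hx).resolve_right hxy⟩

theorem linearIndependent_pair (hxy : B x y ≠ 0) : LinearIndependent K ![x, y] :=
  LinearIndependent.pair_iff.2 fun s t hst ↦
    hB.eq_zero_of_apply_smul_add_smul hxy (by simp [hst]) (by simp [hst])

theorem finrank_span_pair (hxy : B x y ≠ 0) : finrank K (span K {x, y}) = 2 := by
  have := finrank_span_eq_card (hB.linearIndependent_pair hxy)
  rwa [Matrix.range_cons, Matrix.range_cons, Matrix.range_empty, Set.union_empty,
    Set.singleton_union, Fintype.card_fin] at this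

theorem disjoint_span_pair_orthogonal (hxy : B x y ≠ 0) :
    Disjoint (span K {x, y}) (B.orthogonal (span K {x, y})) := by
  rw [disjoint_iff_inf_le]
  intro v hv
  obtain ⟨hv, hvW⟩ := mem_inf.1 hv
  obtain ⟨s, t, rfl⟩ := mem_span_pair.1 hv
  rw [mem_orthogonal_span_iff] at hvW
  obtain ⟨rfl, rfl⟩ := hB.eq_zero_of_apply_smul_add_smul hxy (hvW x (by simp)) (hvW y (by simp))
  simp

end IsAlt

end LinearMap.BilinForm

theorem Submodule.finrank_add_finrank_le_of_disjoint_of_le {K E : Type*} [Field K]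
    [AddCommGroup E] [Module K E] {U W V : Submodule K E} [FiniteDimensional K V]
    (hUW : Disjoint U W) (hU : U ≤ V) (hW : W ≤ V) :
    finrank K U + finrank K W ≤ finrank K V := by
  have : FiniteDimensional K U := finiteDimensional_of_le hU
  have : FiniteDimensional K W := finiteDimensional_of_le hW
  rw [← finrank_sup_add_finrank_inf_eq, hUW.eq_bot, finrank_bot, add_zero]
  exact finrank_mono (sup_le hU hW)

theorem Submodule.span_singleton_eq_of_finrank_le_one {K E : Type*} [Field K]
    [AddCommGroup E] [Module K E] {S : Submodule K E} [FiniteDimensional K S] {w : E}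
    (hS : finrank K S ≤ 1) (hw : w ∈ S) (hw0 : w ≠ 0) : span K {w} = S :=
  eq_of_le_of_finrank_le (span_singleton_le_iff_mem w S |>.2 hw)
    (by rwa [finrank_span_singleton hw0])

namespace LinearMap.BilinForm.IsAlt

variable {K E : Type*} [Field K] [AddCommGroup E] [Module K E] {B : LinearMap.BilinForm K E}
  (hB : B.IsAlt) {r₁ r₂ r₃ r₄ : E}
include hB

theorem finrank_radical_le_one (h13 : B r₁ r₃ ≠ 0)
    (hdim : finrank K (span K {r₁, r₂, r₃, r₄}) ≤ 3) :
    finrank K ↥(span K {r₁, r₂, r₃, r₄} ⊓ B.orthogonal (span K {r₁, r₂, r₃, r₄})) ≤ 1 := by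
  set V := span K {r₁, r₂, r₃, r₄}
  have : FiniteDimensional K V := .span_of_finite K (Set.toFinite _)
  have hWV : span K {r₁, r₃} ≤ V := span_mono (by simp [Set.insert_subset_iff])
  have := finrank_add_finrank_le_of_disjoint_of_le
    ((hB.disjoint_span_pair_orthogonal h13).mono_right
      (inf_le_right.trans (orthogonal_le hWV))) hWV inf_le_left
  rw [hB.finrank_span_pair h13] at this
  omega

variable (h12 : B r₁ r₂ = 0) (h23 : B r₂ r₃ = 0) (h34 : B r₃ r₄ = 0) (h41 : B r₄ r₁ = 0)
include h12 h23 h34 h41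

theorem apply_eq_zero_of_finrank_span_le_three (h13 : B r₁ r₃ ≠ 0)
    (hdim : finrank K (span K {r₁, r₂, r₃, r₄}) ≤ 3) : B r₂ r₄ = 0 := by
  by_contra h24
  have hUW : span K {r₂, r₄} ≤ B.orthogonal (span K {r₁, r₃}) := by
    rw [span_le]
    rintro z (rfl | rfl) <;> rw [SetLike.mem_coe, mem_orthogonal_span_iff] <;>
      simp [h12, hB.eq_iff.1 h23, hB.eq_iff.1 h41, h34]
  have : FiniteDimensional K (span K {r₁, r₂, r₃, r₄}) := .span_of_finite K (Set.toFinite _)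
  have := finrank_add_finrank_le_of_disjoint_of_le (V := span K {r₁, r₂, r₃, r₄})
    ((hB.disjoint_span_pair_orthogonal h13).mono_right hUW)
    (span_mono (by simp [Set.insert_subset_iff])) (span_mono (by simp [Set.insert_subset_iff]))
  rw [hB.finrank_span_pair h13, hB.finrank_span_pair h24] at this
  omega

theorem span_singleton_eq_radical (h13 : B r₁ r₃ ≠ 0)
    (hdim : finrank K (span K {r₁, r₂, r₃, r₄}) ≤ 3) (hr₂ : r₂ ≠ 0) (hr₄ : r₄ ≠ 0) :
    span K {r₂} = span K {r₁, r₂, r₃, r₄} ⊓ B.orthogonal (span K {r₁, r₂, r₃, r₄}) ∧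
      span K {r₄} = span K {r₁, r₂, r₃, r₄} ⊓ B.orthogonal (span K {r₁, r₂, r₃, r₄}) := by
  have : FiniteDimensional K (span K {r₁, r₂, r₃, r₄}) := .span_of_finite K (Set.toFinite _)
  have h24 := hB.apply_eq_zero_of_finrank_span_le_three h12 h23 h34 h41 h13 hdim
  have hrad := hB.finrank_radical_le_one h13 hdim
  have h2 : r₂ ∈ span K {r₁, r₂, r₃, r₄} ⊓ B.orthogonal (span K {r₁, r₂, r₃, r₄}) :=
    ⟨subset_span (by simp), mem_orthogonal_span_iff.2 <| by
      simp [h12, hB.self_eq_zero, hB.eq_iff.1 h23, hB.eq_iff.1 h24]⟩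
  have h4 : r₄ ∈ span K {r₁, r₂, r₃, r₄} ⊓ B.orthogonal (span K {r₁, r₂, r₃, r₄}) :=
    ⟨subset_span (by simp), mem_orthogonal_span_iff.2 <| by
      simp [hB.eq_iff.1 h41, h24, h34, hB.self_eq_zero]⟩
  exact ⟨span_singleton_eq_of_finrank_le_one hrad h2 hr₂,
    span_singleton_eq_of_finrank_le_one hrad h4 hr₄⟩

theorem span_le_orthogonal_span (h13 : B r₁ r₃ = 0) (h24 : B r₂ r₄ = 0) :
    span K {r₁, r₂, r₃, r₄} ≤ B.orthogonal (span K {r₁, r₂, r₃, r₄}) := by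
  rw [span_le]
  rintro z (rfl | rfl | rfl | rfl) <;> rw [SetLike.mem_coe, mem_orthogonal_span_iff] <;>
    simp [hB.self_eq_zero, h12, h23, h34, h41, h13, h24, hB.eq_iff.1 h12, hB.eq_iff.1 h23,
      hB.eq_iff.1 h34, hB.eq_iff.1 h41, hB.eq_iff.1 h13, hB.eq_iff.1 h24]

end LinearMap.BilinForm.IsAlt

theorem omegaPerp_eq_orthogonal {ω : LinearMap.BilinForm ℝ (Fin 4 → ℝ)} (hω : ω.IsRefl)
    (P : Submodule ℝ (Fin 4 → ℝ)) : omegaPerp ω P = ω.orthogonal P := by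
  ext v
  simp only [omegaPerp, mem_iInf, LinearMap.mem_ker, mem_orthogonal_iff]
  exact forall₂_congr fun p _ ↦ hω.eq_iff

theorem stmt_9_general (ω : LinearMap.BilinForm ℝ (Fin 4 → ℝ))
    (halt : ∀ v, ω v v = 0)
    (hnd : ∀ v, (∀ w, ω v w = 0) → v = 0)
    (r₁ r₂ r₃ r₄ : Fin 4 → ℝ)
    (h12 : ω r₁ r₂ = 0) (h23 : ω r₂ r₃ = 0) (h34 : ω r₃ r₄ = 0) (h41 : ω r₄ r₁ = 0)
    (hli12 : LinearIndependent ℝ ![r₁, r₂])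
    (hli34 : LinearIndependent ℝ ![r₃, r₄])
    (V : Submodule ℝ (Fin 4 → ℝ)) (hV : V = Submodule.span ℝ {r₁, r₂, r₃, r₄})
    (hdim : Module.finrank ℝ V = 3)
    (L : Submodule ℝ (Fin 4 → ℝ)) (hL : L = V ⊓ omegaPerp ω V) :
    (Submodule.span ℝ {r₂} = L ∧ Submodule.span ℝ {r₄} = L) ∨
    (Submodule.span ℝ {r₁} = L ∧ Submodule.span ℝ {r₃} = L) := by
  have hω : ω.IsAlt := halt
  obtain ⟨hr₁, hr₂⟩ : r₁ ≠ 0 ∧ r₂ ≠ 0 := by simpa using hli12.ne_zero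
  obtain ⟨hr₃, hr₄⟩ : r₃ ≠ 0 ∧ r₄ ≠ 0 := by simpa using hli34.ne_zero
  subst hV hL
  rw [omegaPerp_eq_orthogonal hω.isRefl]
  by_cases h13 : ω r₁ r₃ = 0
  · by_cases h24 : ω r₂ r₄ = 0
    · have := two_mul_finrank_le_of_le_orthogonal
        (hω.isRefl.nondegenerate_iff_separatingLeft.2 hnd)
        (hω.span_le_orthogonal_span h12 h23 h34 h41 h13 h24)
      simp [hdim] at this
    · have hrot : span ℝ {r₂, r₃, r₄, r₁} = span ℝ {r₁, r₂, r₃, r₄} := by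
        congr 1; ext; simp only [Set.mem_insert_iff, Set.mem_singleton_iff]; tauto
      have := hω.span_singleton_eq_radical h23 h34 h41 h12 h24 (hrot ▸ hdim.le) hr₃ hr₁
      rw [hrot] at this
      exact .inr this.symm
  · exact .inl (hω.span_singleton_eq_radical h12 h23 h34 h41 h13 hdim.le hr₂ hr₄)

/-- Let `ω` be a nondegenerate alternating bilinear form on `ℝ⁴`, and let
`r₁,r₂,r₃,r₄` satisfy `ω(r₁,r₂)=ω(r₂,r₃)=ω(r₃,r₄)=ω(r₄,r₁)=0`, with each adjacent pair
`(r₁,r₂),(r₂,r₃),(r₃,r₄),(r₄,r₁)` linearly independent, and `V = span{r₁,r₂,r₃,r₄}` of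
dimension 3.  Let `L` be the radical of `ω|_V`.  Then either `r₂` and `r₄` each span `L`,
or `r₁` and `r₃` each span `L`. -/
theorem stmt_9 (ω : LinearMap.BilinForm ℝ (Fin 4 → ℝ))
    (halt : ∀ v, ω v v = 0)
    (hnd : ∀ v, (∀ w, ω v w = 0) → v = 0)
    (r₁ r₂ r₃ r₄ : Fin 4 → ℝ)
    (h12 : ω r₁ r₂ = 0) (h23 : ω r₂ r₃ = 0) (h34 : ω r₃ r₄ = 0) (h41 : ω r₄ r₁ = 0)
    (hli12 : LinearIndependent ℝ ![r₁, r₂]) (hli23 : LinearIndependent ℝ ![r₂, r₃])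
    (hli34 : LinearIndependent ℝ ![r₃, r₄]) (hli41 : LinearIndependent ℝ ![r₄, r₁])
    (V : Submodule ℝ (Fin 4 → ℝ)) (hV : V = Submodule.span ℝ {r₁, r₂, r₃, r₄})
    (hdim : Module.finrank ℝ V = 3)
    (L : Submodule ℝ (Fin 4 → ℝ)) (hL : L = V ⊓ omegaPerp ω V) :
    (Submodule.span ℝ {r₂} = L ∧ Submodule.span ℝ {r₄} = L) ∨
    (Submodule.span ℝ {r₁} = L ∧ Submodule.span ℝ {r₃} = L) :=
  stmt_9_general ω halt hnd r₁ r₂ r₃ r₄ h12 h23 h34 h41 hli12 hli34 V hV hdim L hL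
end

section
/- Let n ≥ 1, let A^{(1)}, …, A^{(n)} be real 3×4 matrices, and let u, v, w, x ∈ ℝⁿ. Define the real matrix M with rows indexed by pairs I = (α,i) ∈ {1,…,n}×{1,2,3} and columns indexed by triples of pairs ((β,j),(γ,k),(δ,ℓ)) ∈ ({1,…,n}×{1,2,3})³, whose entry at (I, ((β,j),(γ,k),(δ,ℓ))) is u_α v_β w_γ x_δ · det[A^{(α)}(i,:); A^{(β)}(j,:); A^{(γ)}(k,:); A^{(δ)}(ℓ,:)], the determinant of the 4×4 matrix with the indicated rows. Then the rank of M is at most 4. In particular, every 5×5 minor of M vanishes. -/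
/-- Given real `3×4` matrices `A⁽¹⁾,…,A⁽ⁿ⁾` and scalars `u,v,w,x ∈ ℝⁿ`,
the matrix `M` with rows indexed by `(α,i)` and columns by `((β,j),(γ,k),(δ,ℓ))` whose
entry is `u_α v_β w_γ x_δ · det[A⁽ᵅ⁾(i,:); A⁽ᵝ⁾(j,:); A⁽ᵞ⁾(k,:); A⁽ᵟ⁾(ℓ,:)]` has rank at
most 4; in particular every `5×5` minor of `M` vanishes. -/
theorem stmt_12 (n : ℕ) (hn : 1 ≤ n) (A : Fin n → Matrix (Fin 3) (Fin 4) ℝ)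
    (u v w x : Fin n → ℝ)
    (M : Matrix (Fin n × Fin 3) ((Fin n × Fin 3) × (Fin n × Fin 3) × (Fin n × Fin 3)) ℝ)
    (hM : ∀ (α : Fin n) (i : Fin 3) (β : Fin n) (j : Fin 3) (γ : Fin n) (k : Fin 3)
        (δ : Fin n) (ℓ : Fin 3),
      M (α, i) ((β, j), (γ, k), (δ, ℓ)) =
        u α * v β * w γ * x δ *
          (Matrix.of ![A α i, A β j, A γ k, A δ ℓ]).det) :
    M.rank ≤ 4 ∧
    ∀ (ρ : Fin 5 → Fin n × Fin 3)
      (σ : Fin 5 → (Fin n × Fin 3) × (Fin n × Fin 3) × (Fin n × Fin 3)),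
      (M.submatrix ρ σ).det = 0 := by
  set F : Matrix (Fin n × Fin 3) (Fin 4) ℝ := fun I p => u I.1 * A I.1 I.2 p with hF
  set G : Matrix (Fin 4) ((Fin n × Fin 3) × (Fin n × Fin 3) × (Fin n × Fin 3)) ℝ :=
    fun p c => (-1 : ℝ) ^ (p : ℕ) * v c.1.1 * w c.2.1.1 * x c.2.2.1 *
      ((Matrix.of ![A c.1.1 c.1.2, A c.2.1.1 c.2.1.2, A c.2.2.1 c.2.2.2]).submatrix
        id p.succAbove).det with hG
  have key : M = F * G := by
    ext ⟨α, i⟩ ⟨⟨β, j⟩, ⟨γ, k⟩, ⟨δ, ℓ⟩⟩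
    rw [hM, Matrix.mul_apply, Matrix.det_succ_row_zero]
    simp only [hF, hG, Matrix.of_apply, Matrix.cons_val_zero, Finset.mul_sum]
    apply Finset.sum_congr rfl
    intro p _
    have hsub : (Matrix.of ![A α i, A β j, A γ k, A δ ℓ]).submatrix Fin.succ p.succAbove
        = (Matrix.of ![A β j, A γ k, A δ ℓ]).submatrix id p.succAbove := by
      ext q r
      simp [Matrix.submatrix_apply]
    rw [hsub]
    ring
  have hFrank : ∀ (ρ' : Fin 5 → Fin n × Fin 3),
      (F.submatrix ρ' (id : Fin 4 → Fin 4)).rank ≤ 4 := fun ρ' =>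
    (Matrix.rank_le_card_width _).trans_eq (Fintype.card_fin 4)
  constructor
  · rw [key]
    exact (Matrix.rank_mul_le_left F G).trans
      ((Matrix.rank_le_card_width F).trans_eq (Fintype.card_fin 4))
  · intro ρ σ
    by_contra hdet
    have hunit : IsUnit (M.submatrix ρ σ) := by
      rw [Matrix.isUnit_iff_isUnit_det]
      exact isUnit_iff_ne_zero.mpr hdet
    have h5 : (M.submatrix ρ σ).rank = 5 := by
      rw [Matrix.rank_of_isUnit _ hunit, Fintype.card_fin]
    have hsm : M.submatrix ρ σ = (F.submatrix ρ id) * (G.submatrix id σ) := by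
      rw [key]
      ext a b
      simp [Matrix.mul_apply, Matrix.submatrix_apply]
    have : (M.submatrix ρ σ).rank ≤ 4 := by
      rw [hsm]
      exact (Matrix.rank_mul_le_left _ _).trans (hFrank ρ)
    omega
end

section
/- Let U and U′ be two distinct 3-dimensional linear subspaces of ℝ⁴. Then the linear span of the set {w ∧ w′ : w ∈ U, w′ ∈ U′} is all of Λ²ℝ⁴ (which is 6-dimensional). -/
open ExteriorAlgebra

namespace Stmt16Aux

noncomputable section

abbrev V : Type := Fin 4 → ℝ
abbrev E : Type := ExteriorAlgebra ℝ (Fin 4 → ℝ)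

/-- The wedge of two vectors, as a bilinear map. -/
noncomputable def w : V →ₗ[ℝ] V →ₗ[ℝ] E :=
  (LinearMap.mul ℝ E).compl₁₂ (ι ℝ) (ι ℝ)

@[simp] lemma w_apply (a b : V) : w a b = ι ℝ a * ι ℝ b := rfl

lemma w_same (a : V) : w a a = 0 := by simp [ι_sq_zero]

lemma w_swap (a b : V) : w a b = - w b a := by
  simp only [w_apply]
  exact eq_neg_of_add_eq_zero_left (ι_add_mul_swap a b)

lemma finrank_V : Module.finrank ℝ V = 4 := by
  simp

lemma sup_single_eq_top (p : Submodule ℝ V) (hp : Module.finrank ℝ p = 3)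
    {a : V} (ha : a ∉ p) : p ⊔ Submodule.span ℝ {a} = ⊤ := by
  apply Submodule.eq_top_of_finrank_eq
  have h1 : p < p ⊔ Submodule.span ℝ {a} := by
    refine lt_of_le_of_ne le_sup_left fun h => ha ?_
    exact h ▸ Submodule.mem_sup_right (Submodule.mem_span_singleton_self a)
  have h2 := Submodule.finrank_lt_finrank_of_lt h1
  have h3 := Submodule.finrank_le (p ⊔ Submodule.span ℝ {a})
  rw [finrank_V] at h3 ⊢
  omega

lemma decompose (p : Submodule ℝ V) (hp : Module.finrank ℝ p = 3)
    {a : V} (ha : a ∉ p) (b : V) : ∃ q ∈ p, ∃ c : ℝ, b = q + c • a := by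
  have hb : b ∈ p ⊔ Submodule.span ℝ {a} := by
    rw [sup_single_eq_top p hp ha]; exact Submodule.mem_top
  obtain ⟨q, hq, z, hz, rfl⟩ := Submodule.mem_sup.1 hb
  obtain ⟨c, rfl⟩ := Submodule.mem_span_singleton.1 hz
  exact ⟨q, hq, c, rfl⟩

lemma mem_map₂ (U U' : Submodule ℝ V)
    (hU : Module.finrank ℝ U = 3) (hU' : Module.finrank ℝ U' = 3) (hne : U ≠ U')
    (a b : V) : w a b ∈ Submodule.map₂ w U U' := by
  set S := Submodule.map₂ w U U' with hS
  -- there is an element of U' not in U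
  have hUU' : ∃ v, v ∈ U' ∧ v ∉ U := by
    by_contra h
    push_neg at h
    exact hne ((Submodule.eq_of_le_of_finrank_le (fun x hx => h x hx) (by omega)).symm)
  obtain ⟨v₀, hv₀', hv₀⟩ := hUU'
  have htop : U ⊔ U' = ⊤ := by
    rw [eq_top_iff, ← sup_single_eq_top U hU hv₀]
    exact sup_le_sup_left ((Submodule.span_singleton_le_iff_mem _ _).2 hv₀') _
  have hdecomp : ∀ x : V, ∃ p ∈ U, ∃ q ∈ U', x = p + q := by
    intro x
    have hx : x ∈ U ⊔ U' := htop ▸ Submodule.mem_top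
    obtain ⟨p, hp, q, hq, rfl⟩ := Submodule.mem_sup.1 hx
    exact ⟨p, hp, q, hq, rfl⟩
  have claimA : ∀ u ∈ U, ∀ b : V, w u b ∈ S := by
    intro u hu b
    by_cases hu' : u ∈ U'
    · obtain ⟨p, hp, q, hq, rfl⟩ := hdecomp b
      rw [map_add]
      refine add_mem ?_ (Submodule.apply_mem_map₂ _ hu hq)
      rw [w_swap]
      exact neg_mem (Submodule.apply_mem_map₂ _ hp hu')
    · obtain ⟨q, hq, c, rfl⟩ := decompose U' hU' hu' b
      rw [map_add, map_smul, w_same, smul_zero, add_zero]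
      exact Submodule.apply_mem_map₂ _ hu hq
  have claimB : ∀ v ∈ U', ∀ b : V, w b v ∈ S := by
    intro v hv b
    by_cases hvU : v ∈ U
    · obtain ⟨p, hp, q, hq, rfl⟩ := hdecomp b
      rw [map_add, LinearMap.add_apply]
      refine add_mem (Submodule.apply_mem_map₂ _ hp hv) ?_
      rw [w_swap]
      exact neg_mem (Submodule.apply_mem_map₂ _ hvU hq)
    · obtain ⟨p, hp, c, rfl⟩ := decompose U hU hvU b
      rw [map_add, map_smul, LinearMap.add_apply, LinearMap.smul_apply, w_same,
        smul_zero, add_zero]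
      exact Submodule.apply_mem_map₂ _ hp hv
  obtain ⟨p, hp, q, hq, rfl⟩ := hdecomp a
  rw [map_add, LinearMap.add_apply]
  refine add_mem (claimA p hp b) ?_
  rw [w_swap]
  exact neg_mem (claimB q hq b)

/-- the index set for the basis wedges -/
abbrev I : Type := {p : Fin 4 × Fin 4 // p.1 < p.2}

noncomputable def g : I → E := fun p => w (Pi.single p.1.1 1) (Pi.single p.1.2 1)

/-- the degree-2 alternating form extracting the `(i,j)` coefficient -/
noncomputable def detIJ (i j : Fin 4) : V [⋀^Fin 2]→ₗ[ℝ] ℝ :=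
  Matrix.detRowAlternating.compLinearMap (LinearMap.funLeft ℝ ℝ ![i, j])

noncomputable def fam (i j : Fin 4) : ∀ n, V [⋀^Fin n]→ₗ[ℝ] ℝ
  | 2 => detIJ i j
  | _ => 0

noncomputable def φ (i j : Fin 4) : E →ₗ[ℝ] ℝ := liftAlternating (fam i j)

lemma ι_mul_eq_ιMulti (a b : V) : ι ℝ a * ι ℝ b = ιMulti ℝ 2 ![a, b] := by
  simp [ιMulti_apply]

lemma φ_apply (i j : Fin 4) (a b : V) :
    φ i j (w a b) = a i * b j - a j * b i := by
  rw [w_apply, ι_mul_eq_ιMulti, φ, liftAlternating_apply_ιMulti]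
  show detIJ i j ![a, b] = _
  rw [detIJ, AlternatingMap.compLinearMap_apply]
  rw [show Matrix.detRowAlternating (fun k => LinearMap.funLeft ℝ ℝ ![i, j] (![a, b] k)) =
      Matrix.det (Matrix.of fun k l => (![a, b] k) (![i, j] l)) from rfl]
  rw [Matrix.det_fin_two]
  simp

end

end Stmt16Aux

open Stmt16Aux in
/-- Let `U ≠ U′` be 3-dimensional subspaces of `ℝ⁴`.  Then the span of
`{w ∧ w′ : w ∈ U, w′ ∈ U′}` is all of `Λ²ℝ⁴` (the span of all elementary 2-fold
wedges), which is 6-dimensional. -/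
theorem stmt_16 (U U' : Submodule ℝ (Fin 4 → ℝ))
    (hU : Module.finrank ℝ U = 3) (hU' : Module.finrank ℝ U' = 3) (hne : U ≠ U') :
    Submodule.span ℝ {x : ExteriorAlgebra ℝ (Fin 4 → ℝ) |
        ∃ w ∈ U, ∃ w' ∈ U', x = ι ℝ w * ι ℝ w'} =
      Submodule.span ℝ {x : ExteriorAlgebra ℝ (Fin 4 → ℝ) |
        ∃ a b : Fin 4 → ℝ, x = ι ℝ a * ι ℝ b} ∧
    Module.finrank ℝ (Submodule.span ℝ {x : ExteriorAlgebra ℝ (Fin 4 → ℝ) |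
      ∃ a b : Fin 4 → ℝ, x = ι ℝ a * ι ℝ b}) = 6 := by
  have hSset : {x : ExteriorAlgebra ℝ (Fin 4 → ℝ) | ∃ w ∈ U, ∃ w' ∈ U', x = ι ℝ w * ι ℝ w'} =
      Set.image2 (fun a b => w a b) (U : Set (Fin 4 → ℝ)) (U' : Set (Fin 4 → ℝ)) := by
    ext x
    simp only [Set.mem_setOf_eq, Set.mem_image2, SetLike.mem_coe, w_apply]
    constructor
    · rintro ⟨a, ha, b, hb, rfl⟩; exact ⟨a, ha, b, hb, rfl⟩
    · rintro ⟨a, ha, b, hb, rfl⟩; exact ⟨a, ha, b, hb, rfl⟩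
  have hTset : {x : ExteriorAlgebra ℝ (Fin 4 → ℝ) | ∃ a b : Fin 4 → ℝ, x = ι ℝ a * ι ℝ b} =
      Set.image2 (fun a b => w a b) ((⊤ : Submodule ℝ V) : Set (Fin 4 → ℝ))
        ((⊤ : Submodule ℝ V) : Set (Fin 4 → ℝ)) := by
    ext x
    simp only [Set.mem_setOf_eq, Set.mem_image2, SetLike.mem_coe, Submodule.mem_top,
      true_and, w_apply]
    constructor
    · rintro ⟨a, b, rfl⟩; exact ⟨a, b, rfl⟩
    · rintro ⟨a, b, rfl⟩; exact ⟨a, b, rfl⟩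
  have hS : Submodule.span ℝ
      {x : ExteriorAlgebra ℝ (Fin 4 → ℝ) | ∃ w ∈ U, ∃ w' ∈ U', x = ι ℝ w * ι ℝ w'} =
      Submodule.map₂ w U U' := by
    rw [hSset, ← Submodule.map₂_eq_span_image2]
  have hT : Submodule.span ℝ
      {x : ExteriorAlgebra ℝ (Fin 4 → ℝ) | ∃ a b : Fin 4 → ℝ, x = ι ℝ a * ι ℝ b} =
      Submodule.map₂ w ⊤ ⊤ := by
    rw [hTset, ← Submodule.map₂_eq_span_image2]
  have heq : Submodule.map₂ w U U' = Submodule.map₂ w (⊤ : Submodule ℝ V) ⊤ := by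
    refine le_antisymm (Submodule.map₂_le_map₂ le_top le_top) ?_
    exact Submodule.map₂_le.2 fun a _ b _ => mem_map₂ U U' hU hU' hne a b
  -- The span of all wedges equals the span of the six basis wedges
  have hbasis : (⊤ : Submodule ℝ V) =
      Submodule.span ℝ (Set.range fun i : Fin 4 => (Pi.single i 1 : V)) := by
    have := (Pi.basisFun ℝ (Fin 4)).span_eq
    rw [← this]
    congr 1
    ext x
    simp [Pi.basisFun_apply]
  have hTg : Submodule.map₂ w (⊤ : Submodule ℝ V) ⊤ = Submodule.span ℝ (Set.range g) := by
    rw [hbasis, Submodule.map₂_span_span]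
    refine le_antisymm (Submodule.span_le.2 ?_) (Submodule.span_le.2 ?_)
    · rintro x ⟨-, ⟨i, rfl⟩, -, ⟨j, rfl⟩, rfl⟩
      simp only [SetLike.mem_coe]
      show w (Pi.single i 1) (Pi.single j 1) ∈ Submodule.span ℝ (Set.range g)
      rcases lt_trichotomy i j with h | h | h
      · exact Submodule.subset_span ⟨⟨(i, j), h⟩, rfl⟩
      · subst h
        rw [w_same]
        exact zero_mem _
      · rw [w_swap]
        exact neg_mem (Submodule.subset_span ⟨⟨(j, i), h⟩, rfl⟩)
    · rintro x ⟨p, rfl⟩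
      exact Submodule.subset_span
        ⟨Pi.single p.1.1 1, Set.mem_range_self _, Pi.single p.1.2 1, Set.mem_range_self _, rfl⟩
  have hgind : LinearIndependent ℝ g := by
    refine LinearIndependent.of_comp (LinearMap.pi fun p : I => φ p.1.1 p.1.2) ?_
    have hcomp : ((LinearMap.pi fun p : I => φ p.1.1 p.1.2) ∘ g : I → I → ℝ) =
        fun q : I => Pi.single q 1 := by
      funext q p
      rcases p with ⟨⟨p1, p2⟩, hp⟩
      rcases q with ⟨⟨q1, q2⟩, hq⟩
      have hp' : (p1 : ℕ) < (p2 : ℕ) := hp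
      have hq' : (q1 : ℕ) < (q2 : ℕ) := hq
      simp only [Function.comp_apply, LinearMap.pi_apply, g, φ_apply, Pi.single_apply,
        Subtype.mk.injEq, Prod.mk.injEq, Fin.ext_iff]
      split_ifs <;> first | (exfalso; omega) | norm_num
    rw [hcomp]
    have h1 := (Pi.basisFun ℝ I).linearIndependent
    have h2 : ⇑(Pi.basisFun ℝ I) = fun q : I => Pi.single q (1 : ℝ) :=
      funext fun i => Pi.basisFun_apply ℝ I i
    rwa [h2] at h1
  have hcard : Fintype.card I = 6 := by decide
  have hfin : Module.finrank ℝ (Submodule.span ℝ (Set.range g)) = 6 := by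
    rw [finrank_span_eq_card hgind, hcard]
  constructor
  · rw [hS, hT, heq]
  · rw [hT, hTg, hfin]
end

section
/- With notation as in the context: for every W ∈ ℝ^{n×r}, set U = K W ∈ ℝ^{n×r} and let Y ∈ ℝ^{n×r} be the matrix whose i-th row is Y_{i,:} = U_{i,:} E^{(i)}. Then ((Z ⊗ K)ᵀ D (Z ⊗ K) + λ (I_r ⊗ K)) vec(W) = vec(K Y + λ U), where I_r is the r×r identity matrix. -/
open Matrix Kronecker

/-- With `K ∈ ℝ^{n×n}` symmetric, `Z ∈ ℝ^{M×r}`, `Ω` a set of observed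
index pairs, `D` the 0/1 diagonal observation mask on `ℝ^{nM}`, and
`E⁽ⁱ⁾ = Σ_{j : (i,j)∈Ω} (Z_{j,:})ᵀ Z_{j,:}`: for every `W ∈ ℝ^{n×r}`, setting `U = K W`
and `Y_{i,:} = U_{i,:} E⁽ⁱ⁾`, we have
`((Z ⊗ K)ᵀ D (Z ⊗ K) + λ (I_r ⊗ K)) vec(W) = vec(K Y + λ U)`.
Here `vec(W)` is indexed by pairs `(t,i)` with value `W_{i,t}`, and `vec` of an `n×M`
matrix by pairs `(j,i)`. -/
theorem stmt_18 (n M r : ℕ) (lam : ℝ)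
    (K : Matrix (Fin n) (Fin n) ℝ) (hK : K.IsSymm)
    (Z : Matrix (Fin M) (Fin r) ℝ) (Ω : Finset (Fin n × Fin M))
    (D : Matrix (Fin M × Fin n) (Fin M × Fin n) ℝ)
    (hD : D = Matrix.diagonal (fun p : Fin M × Fin n => if (p.2, p.1) ∈ Ω then 1 else 0))
    (E : Fin n → Matrix (Fin r) (Fin r) ℝ)
    (hE : ∀ (i : Fin n) (a b : Fin r),
      E i a b = ∑ j ∈ Finset.univ.filter (fun j : Fin M => (i, j) ∈ Ω), Z j a * Z j b)
    (W : Matrix (Fin n) (Fin r) ℝ)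
    (U : Matrix (Fin n) (Fin r) ℝ) (hU : U = K * W)
    (Y : Matrix (Fin n) (Fin r) ℝ) (hY : ∀ (i : Fin n) (t : Fin r),
      Y i t = ∑ a : Fin r, U i a * E i a t) :
    ((Z ⊗ₖ K)ᵀ * D * (Z ⊗ₖ K) + lam • ((1 : Matrix (Fin r) (Fin r) ℝ) ⊗ₖ K)).mulVec
        (fun p : Fin r × Fin n => W p.2 p.1) =
      fun p : Fin r × Fin n => (K * Y + lam • U) p.2 p.1 := by
  subst hD hU
  funext p
  obtain ⟨t, i⟩ := p
  simp only [Matrix.add_mulVec, Pi.add_apply, Matrix.smul_mulVec, Pi.smul_apply,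
    smul_eq_mul]
  rw [Matrix.mul_assoc, ← Matrix.mulVec_mulVec, ← Matrix.mulVec_mulVec,
    show (Matrix.diagonal (fun p : Fin M × Fin n => if (p.2, p.1) ∈ Ω then (1:ℝ) else 0)).mulVec
        ((Z ⊗ₖ K).mulVec (fun p : Fin r × Fin n => W p.2 p.1))
      = fun q => (if (q.2, q.1) ∈ Ω then (1:ℝ) else 0) *
          ((Z ⊗ₖ K).mulVec (fun p : Fin r × Fin n => W p.2 p.1) q)
      from funext fun q => Matrix.mulVec_diagonal _ _ _]
  simp only [Matrix.mulVec, dotProduct, Matrix.transpose_apply,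
    Matrix.kroneckerMap_apply, Matrix.add_apply, Matrix.smul_apply, Matrix.mul_apply,
    Matrix.one_apply, smul_eq_mul, Fintype.sum_prod_type, hY, hE, ite_mul, one_mul,
    zero_mul, Finset.sum_ite_eq, Finset.mem_univ, if_true]
  congr 1
  · rw [Finset.sum_comm]
    refine Finset.sum_congr rfl fun x _ => ?_
    simp only [Finset.sum_filter, Finset.mul_sum, Finset.sum_mul]
    rw [Finset.sum_comm]
    refine Finset.sum_congr rfl fun j _ => ?_
    by_cases hc : (x, j) ∈ Ω
    · simp only [hc, if_true, Finset.mul_sum, Finset.sum_mul]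
      refine Finset.sum_congr rfl fun a _ => Finset.sum_congr rfl fun l _ => ?_
      rw [hK.apply]
      ring
    · simp [hc]
  · congr 1
    rw [Finset.sum_comm]
    simp [Finset.sum_ite_eq]
end
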